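/- Let K be a real L×N matrix whose columns have unit Euclidean norm, let S_1,…,S_m be index sets with union S and restricted coherences ζ_j, ν_j, and set ν̂ := max_j ν_j and ζ̌ := min_j ζ_j. Suppose 2·Σ_{j=1}^m ζ_j + ν̂ − ζ̌ < 1. Let M := max_{j∉S} ‖(K_S^T K_S)^{-1} K_S^T k_j‖₁ and let λ_min be the minimum eigenvalue of K_S^T K_S. Then (1 − M)·λ_min ≥ (1 − 2·Σ_j ζ_j − ν̂ + ζ̌)·(1 − Σ_j ζ_j − ν̂ + ζ̌) > 0. -/

import Mathlib

open Matrix Finset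

noncomputable section

/-- The standard inner product `⟨u,v⟩ = ∑ l, u l * v l` on `ℝ^L`. -/
def ipR {L : ℕ} (u v : Fin L → ℝ) : ℝ := ∑ l, u l * v l

/-- The `j`-th column `k_j` of the dictionary `K`. -/
def colR {L N : ℕ} (K : Matrix (Fin L) (Fin N) ℝ) (j : Fin N) : Fin L → ℝ := fun l => K l j

/-- The submatrix `K_S` of the columns of `K` indexed by `S`. -/
def subMatR {L N : ℕ} (K : Matrix (Fin L) (Fin N) ℝ) (S : Finset (Fin N)) :
    Matrix (Fin L) {j : Fin N // j ∈ S} ℝ := Matrix.of fun l j => K l j.1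

/-- The Gram matrix `K_Sᵀ K_S`. -/
def gramR {L N : ℕ} (K : Matrix (Fin L) (Fin N) ℝ) (S : Finset (Fin N)) :
    Matrix {j : Fin N // j ∈ S} {j : Fin N // j ∈ S} ℝ := (subMatR K S)ᵀ * subMatR K S

/-- The vector `(K_Sᵀ K_S)⁻¹ K_Sᵀ k_j`. -/
def ercVecR {L N : ℕ} (K : Matrix (Fin L) (Fin N) ℝ) (S : Finset (Fin N)) (j : Fin N) :
    {i : Fin N // i ∈ S} → ℝ := ((gramR K S)⁻¹ * (subMatR K S)ᵀ) *ᵥ colR K j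

/-- The ℓ1 norm of a real vector, as a nonnegative real number. -/
def l1nR {ι : Type} [Fintype ι] (v : ι → ℝ) : NNReal := ∑ i, ‖v i‖₊

/-! Weight each atom `i ∈ S` by the number `w i` of sets `S_j` containing it. The coherence
assumptions imply that the Gram matrix `G = K_Sᵀ K_S`, which has unit diagonal, is
diagonally dominant in the `w`-weighted sense: `∑_{l ≠ i} w l |G i l| ≤ q w i` with
`q = ∑ ζ_j + ν̂ - ζ̌`, because the off-diagonal mass of row `i` splits over the sets `S_j` into
one intra-coherence term for each of the `w i` sets containing `i` and one inter-coherence term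
for every other set. Gershgorin's theorem for `diag(w)⁻¹ G diag(w)` then gives `λ_min ≥ 1 - q`.
Since `G` is symmetric the same bound holds for its weighted column sums, which controls the
weighted `ℓ¹` norm of `x = G⁻¹ K_Sᵀ k_t`: `(1 - q) ∑ w i |x i| ≤ ∑ w i |⟨k_i, k_t⟩| ≤ ∑ ζ_j` for
`t ∉ S`, hence `M ≤ ∑ ζ_j / (1 - q)`. Multiplying the two bounds gives the claim. -/

theorem Finset.sum_univ_erase_coe {α β : Type*} [DecidableEq α] [AddCommGroup β] (s : Finset α)
    (i : s) (f : α → β) : ∑ l ∈ (univ : Finset s).erase i, f l = ∑ x ∈ s.erase i, f x := by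
  rw [sum_erase_eq_sub (mem_univ i), sum_erase_eq_sub i.2, sum_coe_sort s f]

theorem sum_abs_le_coe_sup_sum_nnnorm {α : Type*} {s : Finset α} {t : α → Finset α}
    {f : α → α → ℝ} {b : α} (hb : b ∈ s) :
    ∑ x ∈ t b, |f b x| ≤ ((s.sup fun i => ∑ x ∈ t i, ‖f i x‖₊ : NNReal) : ℝ) := by
  simpa using NNReal.coe_le_coe.mpr (le_sup (f := fun i => ∑ x ∈ t i, ‖f i x‖₊) hb)

theorem mul_coe_sup_le {α : Type*} {s : Finset α} {f : α → NNReal} {c Z : ℝ} (hc : 0 < c)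
    (hZ : 0 ≤ Z) (h : ∀ a ∈ s, c * f a ≤ Z) : c * ((s.sup f : NNReal) : ℝ) ≤ Z := by
  have hZc : 0 ≤ Z / c := div_nonneg hZ hc.le
  rw [← le_div_iff₀' hc, ← Real.le_toNNReal_iff_coe_le hZc]
  exact Finset.sup_le fun a ha =>
    (Real.le_toNNReal_iff_coe_le hZc).mpr ((le_div_iff₀' hc).mpr (h a ha))

section WeightedDominance

variable {ι : Type*} [Fintype ι] [DecidableEq ι] {A : Matrix ι ι ℝ} {w : ι → ℝ} {q : ℝ}

theorem exists_abs_sub_diag_le_of_weighted_row_le (hw : ∀ i, 0 < w i)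
    (hrow : ∀ i, ∑ l ∈ univ.erase i, w l * |A i l| ≤ q * w i)
    {μ : ℝ} {v : ι → ℝ} (hv : v ≠ 0) (hμ : A *ᵥ v = μ • v) : ∃ k, |μ - A k k| ≤ q := by
  -- Gershgorin's theorem for the similar matrix `diag(w)⁻¹ A diag(w)`.
  set B : Matrix ι ι ℝ := of fun i j => A i j * w j / w i
  have hB : Module.End.HasEigenvalue (toLin' B) μ := by
    refine Module.End.hasEigenvalue_of_hasEigenvector (x := fun i => v i / w i) ⟨?_, ?_⟩
    · rw [Module.End.mem_eigenspace_iff, toLin'_apply]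
      ext i
      have := congrFun hμ i
      simp only [mulVec, dotProduct, Pi.smul_apply, smul_eq_mul] at this ⊢
      simp only [B, of_apply]
      rw [← mul_div_assoc, ← this, Finset.sum_div]
      refine Finset.sum_congr rfl fun j _ => ?_
      field_simp [(hw j).ne', (hw i).ne']
    · intro h0
      exact hv (funext fun i => by
        simpa [(hw i).ne'] using congrFun h0 i)
  obtain ⟨k, hk⟩ := eigenvalue_mem_ball hB
  refine ⟨k, ?_⟩
  rw [Metric.mem_closedBall, Real.dist_eq] at hk
  calc |μ - A k k| = |μ - B k k| := by simp [B, (hw k).ne']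
    _ ≤ ∑ j ∈ univ.erase k, ‖B k j‖ := hk
    _ = (∑ j ∈ univ.erase k, w j * |A k j|) / w k := by
        rw [Finset.sum_div]
        refine Finset.sum_congr rfl fun j _ => ?_
        simp [B, abs_of_pos (hw j), abs_of_pos (hw k), mul_comm]
    _ ≤ q := (div_le_iff₀ (hw k)).mpr (hrow k)

theorem det_ne_zero_of_weighted_row_le (hw : ∀ i, 0 < w i)
    (hrow : ∀ i, ∑ l ∈ univ.erase i, w l * |A i l| ≤ q * w i) (hdiag : ∀ i, q < |A i i|) :
    A.det ≠ 0 := by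
  intro h0
  obtain ⟨v, hv, hAv⟩ := exists_mulVec_eq_zero_iff.mpr h0
  obtain ⟨k, hk⟩ := exists_abs_sub_diag_le_of_weighted_row_le hw hrow hv
    (μ := 0) (by rw [hAv, zero_smul])
  rw [zero_sub, abs_neg] at hk
  exact (hdiag k).not_ge hk

theorem sub_mul_weighted_l1_le_of_weighted_col_le (hw : ∀ i, 0 ≤ w i) (hdiag : ∀ i, A i i = 1)
    (hcol : ∀ l, ∑ i ∈ univ.erase l, w i * |A i l| ≤ q * w l) {x b : ι → ℝ}
    (hx : A *ᵥ x = b) : (1 - q) * ∑ i, w i * |x i| ≤ ∑ i, w i * |b i| := by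
  have hxi : ∀ i, |x i| ≤ |b i| + ∑ l ∈ univ.erase i, |A i l| * |x l| := fun i => by
    have hbi : b i = x i + ∑ l ∈ univ.erase i, A i l * x l := by
      rw [← hx, mulVec, dotProduct, ← Finset.add_sum_erase _ _ (mem_univ i), hdiag, one_mul]
    calc |x i| = |b i - ∑ l ∈ univ.erase i, A i l * x l| := by rw [hbi, add_sub_cancel_right]
      _ ≤ |b i| + |∑ l ∈ univ.erase i, A i l * x l| := abs_sub _ _
      _ ≤ |b i| + ∑ l ∈ univ.erase i, |A i l| * |x l| := by
          gcongr
          simpa only [abs_mul] using Finset.abs_sum_le_sum_abs (fun l => A i l * x l) _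
  have hswap : ∑ i, w i * ∑ l ∈ univ.erase i, |A i l| * |x l|
      = ∑ l, |x l| * ∑ i ∈ univ.erase l, w i * |A i l| := by
    simp only [Finset.mul_sum]
    refine (Finset.sum_comm' fun i l => ?_).trans
      (Finset.sum_congr rfl fun l _ => Finset.sum_congr rfl fun i _ => by ring)
    simp [ne_comm]
  have hoff : ∑ l, |x l| * ∑ i ∈ univ.erase l, w i * |A i l| ≤ q * ∑ i, w i * |x i| := by
    rw [Finset.mul_sum]
    refine Finset.sum_le_sum fun l _ => ?_
    nlinarith [mul_le_mul_of_nonneg_left (hcol l) (abs_nonneg (x l))]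
  have hsum : ∑ i, w i * |x i| ≤ ∑ i, w i * |b i| + q * ∑ i, w i * |x i| :=
    calc ∑ i, w i * |x i| ≤ ∑ i, w i * (|b i| + ∑ l ∈ univ.erase i, |A i l| * |x l|) :=
          Finset.sum_le_sum fun i _ => mul_le_mul_of_nonneg_left (hxi i) (hw i)
      _ = ∑ i, w i * |b i| + ∑ i, w i * ∑ l ∈ univ.erase i, |A i l| * |x l| := by
          rw [← Finset.sum_add_distrib]; simp only [mul_add]
      _ ≤ _ := by rw [hswap]; gcongr
  linarith

end WeightedDominance

section CoverCount

variable {ι α : Type*} [Fintype ι] [DecidableEq α] (T : ι → Finset α)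

def coverCount (x : α) : ℕ := #{j | x ∈ T j}

theorem one_le_coverCount {x : α} (hx : x ∈ univ.biUnion T) : 1 ≤ coverCount T x := by
  obtain ⟨j, -, hj⟩ := mem_biUnion.mp hx
  exact card_pos.mpr ⟨j, mem_filter.mpr ⟨mem_univ j, hj⟩⟩

theorem sum_coverCount_mul (s : Finset α) (f : α → ℝ) :
    ∑ x ∈ s, (coverCount T x : ℝ) * f x = ∑ j, ∑ x ∈ s ∩ T j, f x := by
  simp only [coverCount, card_filter, Nat.cast_sum, Nat.cast_ite, Nat.cast_one, Nat.cast_zero,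
    Finset.sum_mul, ite_mul, one_mul, zero_mul]
  rw [Finset.sum_comm]
  simp only [← Finset.sum_filter, filter_mem_eq_inter]

variable {T} {g : α → α → ℝ} {ζ : ι → ℝ} {νhat ζcheck : ℝ}

theorem sum_coverCount_mul_le_of_notMem_biUnion
    (hζ : ∀ j b, b ∉ T j → ∑ x ∈ T j, |g b x| ≤ ζ j) {t : α} (ht : t ∉ univ.biUnion T) :
    ∑ x ∈ univ.biUnion T, (coverCount T x : ℝ) * |g t x| ≤ ∑ j, ζ j := by
  rw [sum_coverCount_mul]
  refine sum_le_sum fun j _ => ?_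
  rw [inter_eq_right.mpr (subset_biUnion_of_mem T (mem_univ j))]
  exact hζ j t fun h => ht (mem_biUnion.mpr ⟨j, mem_univ j, h⟩)

theorem sum_ite_le_mul_card (hζcheck : ∀ j, ζcheck ≤ ζ j) (hζ0 : ∀ j, 0 ≤ ζ j)
    (p : ι → Prop) [DecidablePred p] (hp : 1 ≤ #{j | p j}) :
    ∑ j, (if p j then νhat else ζ j) ≤ ((∑ j, ζ j) + νhat - ζcheck) * #{j | p j} := by
  have hsplit := sum_filter_add_sum_filter_not univ p ζ
  have hp_ge : #{j | p j} • ζcheck ≤ ∑ j with p j, ζ j :=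
    card_nsmul_le_sum _ ζ ζcheck fun j _ => hζcheck j
  have hZ_le : ∑ j, ζ j ≤ (∑ j, ζ j) * #{j | p j} :=
    le_mul_of_one_le_right (sum_nonneg fun j _ => hζ0 j) (Nat.one_le_cast.mpr hp)
  rw [sum_ite, sum_const, nsmul_eq_mul] at *
  nlinarith

theorem sum_erase_coverCount_mul_le
    (hζ : ∀ j b, b ∉ T j → ∑ x ∈ T j, |g b x| ≤ ζ j)
    (hν : ∀ j b, b ∈ T j → ∑ x ∈ (T j).erase b, |g b x| ≤ νhat)
    (hζcheck : ∀ j, ζcheck ≤ ζ j) (hζ0 : ∀ j, 0 ≤ ζ j) {a : α} (ha : a ∈ univ.biUnion T) :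
    ∑ x ∈ (univ.biUnion T).erase a, (coverCount T x : ℝ) * |g a x|
      ≤ ((∑ j, ζ j) + νhat - ζcheck) * coverCount T a := by
  rw [sum_coverCount_mul]
  calc ∑ j, ∑ x ∈ (univ.biUnion T).erase a ∩ T j, |g a x|
      ≤ ∑ j, (if a ∈ T j then νhat else ζ j) := by
        refine sum_le_sum fun j _ => ?_
        rw [erase_inter, inter_eq_right.mpr (subset_biUnion_of_mem T (mem_univ j))]
        by_cases haj : a ∈ T j
        · simpa [haj] using hν j a haj
        · simpa [haj, erase_eq_of_notMem haj] using hζ j a haj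
    _ ≤ _ := sum_ite_le_mul_card hζcheck hζ0 _ (one_le_coverCount T ha)

end CoverCount

section Dictionary

variable {L N m : ℕ} (K : Matrix (Fin L) (Fin N) ℝ)

theorem ipR_comm (u v : Fin L → ℝ) : ipR u v = ipR v u := dotProduct_comm u v

theorem coe_l1nR {ι : Type} [Fintype ι] (v : ι → ℝ) : (l1nR v : ℝ) = ∑ i, |v i| := by
  simp [l1nR]

theorem gramR_apply (S : Finset (Fin N)) (i l : S) :
    gramR K S i l = ipR (colR K i) (colR K l) := rfl

theorem gramR_comm (S : Finset (Fin N)) (i l : S) : gramR K S i l = gramR K S l i :=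
  ipR_comm _ _

theorem gramR_self (hunit : ∀ j, ∑ l, K l j ^ 2 = 1) (S : Finset (Fin N)) (i : S) :
    gramR K S i i = 1 := by
  simpa [gramR_apply, ipR, colR, sq] using hunit i

theorem gramR_mulVec_ercVecR {S : Finset (Fin N)} (hS : IsUnit (gramR K S).det) (t : Fin N) :
    gramR K S *ᵥ ercVecR K S t = fun i : S => ipR (colR K i) (colR K t) := by
  unfold ercVecR
  rw [mulVec_mulVec, ← Matrix.mul_assoc, mul_nonsing_inv _ hS, Matrix.one_mul]
  rfl

variable {Ssets : Fin m → Finset (Fin N)} {ζ : Fin m → ℝ} {νhat ζcheck : ℝ}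

theorem sum_erase_coverCount_mul_abs_gramR_le
    (hinter : ∀ j, ∀ b ∉ Ssets j, ∑ x ∈ Ssets j, |ipR (colR K b) (colR K x)| ≤ ζ j)
    (hintra : ∀ j, ∀ b ∈ Ssets j, ∑ x ∈ (Ssets j).erase b, |ipR (colR K b) (colR K x)| ≤ νhat)
    (hζcheck : ∀ j, ζcheck ≤ ζ j) (hζ0 : ∀ j, 0 ≤ ζ j) (i : univ.biUnion Ssets) :
    ∑ l ∈ univ.erase i, (coverCount Ssets l : ℝ) * |gramR K _ i l|
      ≤ ((∑ j, ζ j) + νhat - ζcheck) * coverCount Ssets i := by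
  simp only [gramR_apply]
  rw [sum_univ_erase_coe _ i fun x => (coverCount Ssets x : ℝ) * |ipR (colR K i) (colR K x)|]
  exact sum_erase_coverCount_mul_le hinter hintra hζcheck hζ0 i.2

theorem sum_coverCount_mul_abs_ipR_le
    (hinter : ∀ j, ∀ b ∉ Ssets j, ∑ x ∈ Ssets j, |ipR (colR K b) (colR K x)| ≤ ζ j)
    {t : Fin N} (ht : t ∉ univ.biUnion Ssets) :
    ∑ i : univ.biUnion Ssets, (coverCount Ssets i : ℝ) * |ipR (colR K i) (colR K t)|
      ≤ ∑ j, ζ j := by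
  rw [sum_coe_sort _ fun x => (coverCount Ssets x : ℝ) * |ipR (colR K x) (colR K t)|]
  simpa only [ipR_comm (colR K t)] using sum_coverCount_mul_le_of_notMem_biUnion hinter ht

theorem sub_mul_coe_l1nR_ercVecR_le {S : Finset (Fin N)} {w : S → ℝ} {q Z : ℝ} (hq : q ≤ 1)
    (hw : ∀ i, 1 ≤ w i) (hdiag : ∀ i, gramR K S i i = 1)
    (hcol : ∀ l, ∑ i ∈ univ.erase l, w i * |gramR K S i l| ≤ q * w l)
    (hS : IsUnit (gramR K S).det) {t : Fin N}
    (ht : ∑ i, w i * |ipR (colR K i) (colR K t)| ≤ Z) :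
    (1 - q) * l1nR (ercVecR K S t) ≤ Z := by
  have hx := sub_mul_weighted_l1_le_of_weighted_col_le (fun i => zero_le_one.trans (hw i)) hdiag
    hcol (gramR_mulVec_ercVecR K hS t)
  rw [coe_l1nR]
  calc (1 - q) * ∑ i, |ercVecR K S t i| ≤ (1 - q) * ∑ i, w i * |ercVecR K S t i| :=
        mul_le_mul_of_nonneg_left
          (sum_le_sum fun i _ => le_mul_of_one_le_left (abs_nonneg _) (hw i)) (sub_nonneg.mpr hq)
    _ ≤ Z := hx.trans ht

end Dictionary

theorem sub_sub_mul_sub_le_sub_mul {q Z M μ : ℝ} (hZ : 0 ≤ Z) (hqZ : q + Z < 1)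
    (hμ : |μ - 1| ≤ q) (hM : (1 - q) * M ≤ Z) : (1 - q - Z) * (1 - q) ≤ (1 - M) * μ := by
  have hq0 : 0 ≤ q := (abs_nonneg _).trans hμ
  have hM1 : 0 ≤ 1 - M := by nlinarith
  calc (1 - q - Z) * (1 - q) ≤ 1 - q - Z := mul_le_of_le_one_right (by linarith) (by linarith)
    _ ≤ (1 - M) * (1 - q) := by linarith
    _ ≤ (1 - M) * μ :=
        mul_le_mul_of_nonneg_left (by linarith [neg_abs_le (μ - 1)]) hM1

theorem stmt10_general (L N m : ℕ) (hm : 1 ≤ m)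
    (K : Matrix (Fin L) (Fin N) ℝ)
    (hunit : ∀ j : Fin N, ∑ l, (K l j) ^ 2 = 1)
    (Ssets : Fin m → Finset (Fin N))
    (S : Finset (Fin N)) (hS : S = Finset.univ.biUnion Ssets)
    (ζ ν : Fin m → ℝ)
    (hζ : ∀ j, ζ j =
      (((Ssets j)ᶜ.sup fun i => ∑ l ∈ Ssets j, ‖ipR (colR K i) (colR K l)‖₊ : NNReal) : ℝ))
    (hν : ∀ j, ν j =
      (((Ssets j).sup fun i => ∑ l ∈ (Ssets j).erase i, ‖ipR (colR K i) (colR K l)‖₊ : NNReal) : ℝ))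
    (νhat : ℝ) (hνhat : νhat = Finset.univ.sup' (Finset.univ_nonempty_iff.mpr ⟨⟨0, hm⟩⟩) ν)
    (ζcheck : ℝ) (hζcheck : ζcheck = Finset.univ.inf' (Finset.univ_nonempty_iff.mpr ⟨⟨0, hm⟩⟩) ζ)
    (h1 : 2 * (∑ j, ζ j) + νhat - ζcheck < 1)
    (M : ℝ) (hM : M = ((Sᶜ.sup fun j => l1nR (ercVecR K S j) : NNReal) : ℝ))
    (lmin : ℝ)
    (hlmin : ∃ v : {i : Fin N // i ∈ S} → ℝ, v ≠ 0 ∧ gramR K S *ᵥ v = lmin • v) :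
    (1 - 2 * (∑ j, ζ j) - νhat + ζcheck) * (1 - (∑ j, ζ j) - νhat + ζcheck)
      ≤ (1 - M) * lmin ∧
    0 < (1 - 2 * (∑ j, ζ j) - νhat + ζcheck) * (1 - (∑ j, ζ j) - νhat + ζcheck) := by
  subst hS
  set Z := ∑ j, ζ j
  set q := Z + νhat - ζcheck
  have hinter : ∀ j, ∀ b ∉ Ssets j, ∑ x ∈ Ssets j, |ipR (colR K b) (colR K x)| ≤ ζ j :=
    fun j b hb => hζ j ▸ sum_abs_le_coe_sup_sum_nnnorm (t := fun _ => Ssets j)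
      (f := fun b x => ipR (colR K b) (colR K x)) (mem_compl.mpr hb)
  have hintra : ∀ j, ∀ b ∈ Ssets j, ∑ x ∈ (Ssets j).erase b, |ipR (colR K b) (colR K x)| ≤ νhat :=
    fun j b hb => (hν j ▸ sum_abs_le_coe_sup_sum_nnnorm (f := fun b x => ipR (colR K b) (colR K x))
      hb).trans (hνhat ▸ le_sup' ν (mem_univ j))
  have hζ0 : ∀ j, 0 ≤ ζ j := fun j => hζ j ▸ NNReal.coe_nonneg _
  have hζc : ∀ j, ζcheck ≤ ζ j := fun j => hζcheck ▸ inf'_le ζ (mem_univ j)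
  have hw : ∀ i : univ.biUnion Ssets, (1 : ℝ) ≤ coverCount Ssets i :=
    fun i => Nat.one_le_cast.mpr (one_le_coverCount Ssets i.2)
  have hrow := sum_erase_coverCount_mul_abs_gramR_le K hinter hintra hζc hζ0
  obtain ⟨v, hv, hveig⟩ := hlmin
  obtain ⟨k, hgersh⟩ := exists_abs_sub_diag_le_of_weighted_row_le
    (fun i => one_pos.trans_le (hw i)) hrow hv hveig
  rw [gramR_self K hunit] at hgersh
  have hZ0 : 0 ≤ Z := sum_nonneg fun j _ => hζ0 j
  have hdet := det_ne_zero_of_weighted_row_le (fun i => one_pos.trans_le (hw i)) hrow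
    fun i => by rw [gramR_self K hunit, abs_one]; linarith
  have hMq : (1 - q) * M ≤ Z := hM ▸ mul_coe_sup_le (by linarith) hZ0 fun t ht =>
    sub_mul_coe_l1nR_ercVecR_le K (q := q) (by linarith) hw (gramR_self K hunit _)
      (fun l => by simpa only [gramR_comm K _ _ l] using hrow l) hdet.isUnit
      (sum_coverCount_mul_abs_ipR_le K hinter (mem_compl.mp ht))
  have htarget : (1 - 2 * Z - νhat + ζcheck) * (1 - Z - νhat + ζcheck)
      = (1 - q - Z) * (1 - q) := by ring
  rw [htarget]
  exact ⟨sub_sub_mul_sub_le_sub_mul hZ0 (by linarith) hgersh hMq, mul_pos (by linarith) (by linarith)⟩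

/-- quantitative content of Theorem 4: for index sets `S_1, …, S_m`
with union `S`, restricted coherences `ζ_j`, `ν_j`, `ν̂ = max_j ν_j`, `ζ̌ = min_j ζ_j`,
if `2 ∑_j ζ_j + ν̂ - ζ̌ < 1` then, with `M` the exact-recovery constant of `S` and
`λ_min` the minimum eigenvalue of `K_Sᵀ K_S`,
`(1 - M)·λ_min ≥ (1 - 2 ∑_j ζ_j - ν̂ + ζ̌)(1 - ∑_j ζ_j - ν̂ + ζ̌) > 0`. -/
theorem stmt10 (L N m : ℕ) (hL : 1 ≤ L) (hN : 1 ≤ N) (hm : 1 ≤ m)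
    (K : Matrix (Fin L) (Fin N) ℝ)
    (hunit : ∀ j : Fin N, ∑ l, (K l j) ^ 2 = 1)
    (Ssets : Fin m → Finset (Fin N))
    (S : Finset (Fin N)) (hS : S = Finset.univ.biUnion Ssets)
    (ζ ν : Fin m → ℝ)
    (hζ : ∀ j, ζ j =
      (((Ssets j)ᶜ.sup fun i => ∑ l ∈ Ssets j, ‖ipR (colR K i) (colR K l)‖₊ : NNReal) : ℝ))
    (hν : ∀ j, ν j =
      (((Ssets j).sup fun i => ∑ l ∈ (Ssets j).erase i, ‖ipR (colR K i) (colR K l)‖₊ : NNReal) : ℝ))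
    (νhat : ℝ) (hνhat : νhat = Finset.univ.sup' (Finset.univ_nonempty_iff.mpr ⟨⟨0, hm⟩⟩) ν)
    (ζcheck : ℝ) (hζcheck : ζcheck = Finset.univ.inf' (Finset.univ_nonempty_iff.mpr ⟨⟨0, hm⟩⟩) ζ)
    (h1 : 2 * (∑ j, ζ j) + νhat - ζcheck < 1)
    (M : ℝ) (hM : M = ((Sᶜ.sup fun j => l1nR (ercVecR K S j) : NNReal) : ℝ))
    (lmin : ℝ)
    (hlmin : ∃ v : {i : Fin N // i ∈ S} → ℝ, v ≠ 0 ∧ gramR K S *ᵥ v = lmin • v)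
    (hlminMin : ∀ (μ : ℝ) (v : {i : Fin N // i ∈ S} → ℝ),
        v ≠ 0 → gramR K S *ᵥ v = μ • v → lmin ≤ μ) :
    (1 - 2 * (∑ j, ζ j) - νhat + ζcheck) * (1 - (∑ j, ζ j) - νhat + ζcheck)
      ≤ (1 - M) * lmin ∧
    0 < (1 - 2 * (∑ j, ζ j) - νhat + ζcheck) * (1 - (∑ j, ζ j) - νhat + ζcheck) :=
  stmt10_general L N m hm K hunit Ssets S hS ζ ν hζ hν νhat hνhat ζcheck hζcheck h1 M hM lmin hlmin
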